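/- arXiv:1504.05783 — 3 statements merged into one kernel-verified Lean document; each statement's English description precedes it below -/
import Mathlib

section
/- Let k, n be natural numbers with n ≥ 1, and partition [−1,1] into 2^n equal elements I_j = [x_{j−1/2}, x_{j+1/2}) with x_{j+1/2} = −1 + (j+1)·2^{−n+1}. Let u_h : [−1,1] → ℝ restrict to a polynomial of degree at most k on each element I_j. Let ψ : ℝ → ℝ be integrable on [−1,1], vanish outside [−1,1], and have vanishing moments up to order k, and for j = 0,…,2^{n−1}−1 set ψ^{n−1}_j(x) = 2^{(n−1)/2} ψ(2^{n−1}(x+1) − 2j − 1). Then the coefficient d_j = ∫_{−1}^{1} u_h(x) ψ^{n−1}_j(x) dx satisfies d_j = 2^{−(n−1)/2} Σ_{m=0}^{k} c_m · ( u_h^{(m)}(x_{2j+1/2}^+) − u_h^{(m)}(x_{2j+1/2}^−) ), where c_m = (2^{(−n+1)m}/m!) · ∫_{0}^{1} t^m ψ(t) dt and u_h^{(m)}(x^±) denote the one-sided m-th derivatives of u_h at x (i.e. the m-th derivatives of the polynomial pieces on the right and left elements). -/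
open MeasureTheory Finset

/-!
Substituting `x = x_{2j+1/2} + 2^{1-n} t` turns `d_j` into
`2^{-(n-1)/2} ∫_{-1}^{1} u_h(x_{2j+1/2} + 2^{1-n} t) ψ(t) dt`, because `ψ^{n-1}_j` lives on
`I_{2j} ∪ I_{2j+1}`. On `[-1,0)` and `[0,1)` the integrand is the polynomial piece of the left,
resp. right, element; expanding both in Taylor series about the node, the vanishing
moments `∫_{-1}^{1} t^m ψ = 0` turn `∫_{-1}^{0} t^m ψ` into `-∫_{0}^{1} t^m ψ`, and the two
expansions combine into the jumps of the derivatives.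
-/

section

open Set Polynomial Nat

theorem Polynomial.eval_add_eq_sum_range_iterate_derivative {K : Type*} [Field K] [CharZero K]
    {k : ℕ} {p : K[X]} (hp : p.natDegree ≤ k) (y x : K) :
    p.eval (y + x) = ∑ m ∈ range (k + 1), (derivative^[m] p).eval y / m ! * x ^ m := by
  rw [add_comm, ← taylor_eval,
    eval_eq_sum_range' ((natDegree_taylor p y).trans_lt (Nat.lt_succ_of_le hp))]
  refine sum_congr rfl fun m _ => ?_
  rw [taylor_coeff, ← factorial_smul_hasseDeriv, LinearMap.smul_apply, eval_smul, nsmul_eq_mul,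
    mul_div_cancel_left₀ _ (Nat.cast_ne_zero.2 (factorial_ne_zero m))]

theorem intervalIntegral_eval_add_mul_mul {k : ℕ} {p : ℝ[X]} (hp : p.natDegree ≤ k)
    {ψ : ℝ → ℝ} {a b : ℝ} (hψ : IntervalIntegrable ψ volume a b) (y h : ℝ) :
    ∫ t in a..b, p.eval (y + h * t) * ψ t =
      ∑ m ∈ range (k + 1),
        (derivative^[m] p).eval y / m ! * h ^ m * ∫ t in a..b, t ^ m * ψ t := by
  have hexpand (t : ℝ) : p.eval (y + h * t) * ψ t =
      ∑ m ∈ range (k + 1), (derivative^[m] p).eval y / m ! * h ^ m * (t ^ m * ψ t) := by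
    rw [eval_add_eq_sum_range_iterate_derivative hp, sum_mul]
    exact sum_congr rfl fun m _ => by ring
  simp_rw [hexpand]
  rw [intervalIntegral.integral_finsetSum fun m _ =>
    (hψ.continuousOn_mul (continuous_pow m).continuousOn).const_mul _]
  simp_rw [intervalIntegral.integral_const_mul]

theorem intervalIntegral_eq_integral_of_forall_notMem_Icc {E : Type*} [NormedAddCommGroup E]
    [NormedSpace ℝ E] {f : ℝ → E} {a b : ℝ} (hab : a ≤ b)
    (hf : ∀ x ∉ Icc a b, f x = 0) :
    ∫ x in a..b, f x = ∫ x, f x := by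
  rw [intervalIntegral.integral_of_le hab, ← integral_Icc_eq_integral_Ioc,
    setIntegral_eq_integral_of_forall_compl_eq_zero hf]

theorem integral_comp_add_mul_of_pos {E : Type*} [NormedAddCommGroup E] [NormedSpace ℝ E]
    (f : ℝ → E) (y : ℝ) {h : ℝ} (hh : 0 < h) :
    ∫ t, f (y + h * t) = h⁻¹ • ∫ x, f x := by
  rw [Measure.integral_comp_mul_left (fun s => f (y + s)) h, integral_add_left_eq_self,
    abs_of_pos (inv_pos.2 hh)]

theorem intervalIntegral_mul_comp_div_sub {g ψ : ℝ → ℝ}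
    (hψ : ∀ x ∉ Icc (-1 : ℝ) 1, ψ x = 0) {y h : ℝ} (hh : 0 < h) (hl : -1 ≤ y - h)
    (hr : y + h ≤ 1) :
    ∫ x in (-1 : ℝ)..1, g x * ψ ((x - y) / h) =
      h * ∫ t in (-1 : ℝ)..1, g (y + h * t) * ψ t := by
  have hsupp : ∀ x ∉ Icc (-1 : ℝ) 1, g x * ψ ((x - y) / h) = 0 := by
    intro x hx
    rw [hψ _ fun ht => hx ?_, mul_zero]
    rw [Set.mem_Icc, le_div_iff₀ hh, div_le_iff₀ hh] at ht
    constructor <;> linarith [ht.1, ht.2]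
  rw [intervalIntegral_eq_integral_of_forall_notMem_Icc (by norm_num) hsupp,
    intervalIntegral_eq_integral_of_forall_notMem_Icc (by norm_num)
      fun t ht => by rw [hψ t ht, mul_zero]]
  have hsub := integral_comp_add_mul_of_pos (fun x => g x * ψ ((x - y) / h)) y hh
  simp only [add_sub_cancel_left, mul_div_cancel_left₀ _ hh.ne'] at hsub
  rw [hsub, smul_eq_mul, mul_inv_cancel_left₀ hh.ne']

theorem intervalIntegral_comp_add_mul_mul_eq_add {u f g ψ : ℝ → ℝ} {y h : ℝ} (hh : 0 < h)
    (hf : ∀ x ∈ Ico (y - h) y, u x = f x) (hg : ∀ x ∈ Ico y (y + h), u x = g x)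
    (hfc : Continuous f) (hgc : Continuous g) (hψl : IntervalIntegrable ψ volume (-1) 0)
    (hψr : IntervalIntegrable ψ volume 0 1) :
    ∫ t in (-1 : ℝ)..1, u (y + h * t) * ψ t =
      (∫ t in (-1 : ℝ)..0, f (y + h * t) * ψ t) +
        ∫ t in (0 : ℝ)..1, g (y + h * t) * ψ t := by
  have hleft : EqOn (fun t => f (y + h * t) * ψ t) (fun t => u (y + h * t) * ψ t) (Ioo (-1) 0) :=
    fun t ht => by
      dsimp only
      rw [hf _ ⟨by nlinarith [ht.1], by nlinarith [ht.2]⟩]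
  have hright : EqOn (fun t => g (y + h * t) * ψ t) (fun t => u (y + h * t) * ψ t) (Ioo 0 1) :=
    fun t ht => by
      dsimp only
      rw [hg _ ⟨by nlinarith [ht.1], by nlinarith [ht.2]⟩]
  have hfi : IntervalIntegrable (fun t => f (y + h * t) * ψ t) volume (-1) 0 :=
    hψl.continuousOn_mul (by fun_prop : Continuous fun t => f (y + h * t)).continuousOn
  have hgi : IntervalIntegrable (fun t => g (y + h * t) * ψ t) volume 0 1 :=
    hψr.continuousOn_mul (by fun_prop : Continuous fun t => g (y + h * t)).continuousOn
  rw [← intervalIntegral.integral_add_adjacent_intervals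
      (hfi.congr_uIoo (by simpa [Set.uIoo_of_le] using hleft))
      (hgi.congr_uIoo (by simpa [Set.uIoo_of_le] using hright)),
    intervalIntegral.integral_congr_Ioo_of_le (by norm_num) hleft,
    intervalIntegral.integral_congr_Ioo_of_le (by norm_num) hright]

theorem intervalIntegral_pow_mul_neg_one_zero_eq_neg {ψ : ℝ → ℝ} {m : ℕ}
    (hψl : IntervalIntegrable ψ volume (-1) 0) (hψr : IntervalIntegrable ψ volume 0 1)
    (hm : ∫ t in (-1 : ℝ)..1, t ^ m * ψ t = 0) :
    ∫ t in (-1 : ℝ)..0, t ^ m * ψ t = -∫ t in (0 : ℝ)..1, t ^ m * ψ t := by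
  rw [eq_neg_iff_add_eq_zero, intervalIntegral.integral_add_adjacent_intervals
    (hψl.continuousOn_mul (continuous_pow m).continuousOn)
    (hψr.continuousOn_mul (continuous_pow m).continuousOn), hm]

theorem intervalIntegral_comp_add_mul_mul_eq_sum_jump {k : ℕ} {u ψ : ℝ → ℝ} {p q : ℝ[X]}
    (hp : p.natDegree ≤ k) (hq : q.natDegree ≤ k) {y h : ℝ} (hh : 0 < h)
    (hpu : ∀ x ∈ Ico (y - h) y, u x = p.eval x) (hqu : ∀ x ∈ Ico y (y + h), u x = q.eval x)
    (hψ : IntervalIntegrable ψ volume (-1) 1)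
    (hmom : ∀ m ≤ k, ∫ t in (-1 : ℝ)..1, t ^ m * ψ t = 0) :
    ∫ t in (-1 : ℝ)..1, u (y + h * t) * ψ t =
      ∑ m ∈ range (k + 1), (h ^ m / m ! * ∫ t in (0 : ℝ)..1, t ^ m * ψ t) *
        ((derivative^[m] q).eval y - (derivative^[m] p).eval y) := by
  have hψl : IntervalIntegrable ψ volume (-1) 0 :=
    hψ.mono_set (by simp [Set.uIcc_of_le, Set.Icc_subset_Icc_iff])
  have hψr : IntervalIntegrable ψ volume 0 1 :=
    hψ.mono_set (by simp [Set.uIcc_of_le, Set.Icc_subset_Icc_iff])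
  rw [intervalIntegral_comp_add_mul_mul_eq_add hh hpu hqu p.continuous q.continuous hψl hψr,
    intervalIntegral_eval_add_mul_mul hp hψl, intervalIntegral_eval_add_mul_mul hq hψr,
    ← sum_add_distrib]
  refine sum_congr rfl fun m hm => ?_
  rw [intervalIntegral_pow_mul_neg_one_zero_eq_neg hψl hψr
    (hmom m (mem_range_succ_iff.mp hm))]
  ring

theorem pow_pred_mul_zpow_one_sub {K : Type*} [DivisionRing K] {x : K} (hx : x ≠ 0) {n : ℕ}
    (hn : 1 ≤ n) : x ^ (n - 1) * x ^ ((1 : ℤ) - n) = 1 := by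
  rw [← zpow_natCast, ← zpow_add₀ hx, Nat.cast_sub hn]
  simp

theorem rpow_half_pred_mul_zpow_one_sub {x : ℝ} (hx : 0 < x) (n : ℕ) :
    x ^ (((n : ℝ) - 1) / 2) * x ^ ((1 : ℤ) - n) = x ^ (-(((n : ℝ) - 1) / 2)) := by
  rw [← Real.rpow_intCast, ← Real.rpow_add hx]
  push_cast
  ring_nf

end

/-- The multiwavelet coefficient on level `n-1` of a piecewise-polynomial DG approximation
on `2^n` equal elements of `[-1,1]` equals a weighted sum of the jumps of the one-sided
derivatives of the approximation at the interior element boundary `x_{2j+1/2}`. -/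
theorem multiwavelet_level_coefficient_jump (k n : ℕ) (hn : 1 ≤ n) (ψ uh : ℝ → ℝ)
    (P : ℕ → Polynomial ℝ)
    (hψint : IntegrableOn ψ (Set.Icc (-1) 1))
    (hψsupp : ∀ x : ℝ, x ∉ Set.Icc (-1 : ℝ) 1 → ψ x = 0)
    (hmom : ∀ m ≤ k, ∫ t in (-1 : ℝ)..1, t ^ m * ψ t = 0)
    (hdeg : ∀ j, (P j).degree ≤ (k : WithBot ℕ))
    -- `uh` restricts to the polynomial `P j` on the element
    -- `I_j = [x_{j-1/2}, x_{j+1/2})` with `x_{j+1/2} = -1 + (j+1) * 2^{-n+1}`: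
    (hP : ∀ j : ℕ, j < 2 ^ n → ∀ x ∈ Set.Ico ((-1 : ℝ) + (j : ℝ) * (2 : ℝ) ^ ((1 : ℤ) - (n : ℤ)))
        ((-1 : ℝ) + ((j : ℝ) + 1) * (2 : ℝ) ^ ((1 : ℤ) - (n : ℤ))), uh x = (P j).eval x)
    (j : ℕ) (hj : j < 2 ^ (n - 1)) :
    -- `d_j = ∫ u_h ψ^{n-1}_j`, where `ψ^{n-1}_j(x) = 2^{(n-1)/2} ψ(2^{n-1}(x+1) - 2j - 1)`
    ∫ x in (-1 : ℝ)..1,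
        uh x * ((2 : ℝ) ^ (((n : ℝ) - 1) / 2) * ψ ((2 : ℝ) ^ (n - 1) * (x + 1) - 2 * (j : ℝ) - 1)) =
      (2 : ℝ) ^ (-(((n : ℝ) - 1) / 2)) *
        ∑ m ∈ Finset.range (k + 1),
          ((2 : ℝ) ^ (((1 : ℤ) - (n : ℤ)) * (m : ℤ)) / (m.factorial : ℝ) *
              ∫ t in (0 : ℝ)..1, t ^ m * ψ t) *
            ((Polynomial.derivative^[m] (P (2 * j + 1))).eval
                ((-1 : ℝ) + ((2 * j : ℝ) + 1) * (2 : ℝ) ^ ((1 : ℤ) - (n : ℤ))) -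
             (Polynomial.derivative^[m] (P (2 * j))).eval
                ((-1 : ℝ) + ((2 * j : ℝ) + 1) * (2 : ℝ) ^ ((1 : ℤ) - (n : ℤ)))) := by
  set h : ℝ := (2 : ℝ) ^ ((1 : ℤ) - (n : ℤ))
  set xc : ℝ := -1 + ((2 * j : ℝ) + 1) * h
  have hh : 0 < h := by positivity
  have hscale : (2 : ℝ) ^ (n - 1) * h = 1 := pow_pred_mul_zpow_one_sub two_ne_zero hn
  have hl : -1 ≤ xc - h := by
    have : (0 : ℝ) ≤ 2 * j * h := by positivity
    linarith
  have hr : xc + h ≤ 1 := by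
    have : ((j : ℝ) + 1) * h ≤ 2 ^ (n - 1) * h :=
      mul_le_mul_of_nonneg_right (by exact_mod_cast Nat.succ_le_of_lt hj) hh.le
    linarith
  have harg (x : ℝ) : (2 : ℝ) ^ (n - 1) * (x + 1) - 2 * (j : ℝ) - 1 = (x - xc) / h := by
    rw [eq_div_iff hh.ne']
    linear_combination (x + 1) * hscale
  have hpow : 2 ^ n = 2 * 2 ^ (n - 1) := by rw [← pow_succ', Nat.sub_add_cancel hn]
  have hleft : ∀ x ∈ Set.Ico (xc - h) xc, uh x = (P (2 * j)).eval x := fun x hx =>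
    hP (2 * j) (by omega) x (by convert hx using 2 <;> push_cast <;> ring)
  have hright : ∀ x ∈ Set.Ico xc (xc + h), uh x = (P (2 * j + 1)).eval x := fun x hx =>
    hP (2 * j + 1) (by omega) x (by convert hx using 2 <;> push_cast <;> ring)
  simp_rw [harg, mul_left_comm (uh _), intervalIntegral.integral_const_mul]
  rw [intervalIntegral_mul_comp_div_sub hψsupp hh hl hr,
    intervalIntegral_comp_add_mul_mul_eq_sum_jump (Polynomial.natDegree_le_of_degree_le (hdeg _))
      (Polynomial.natDegree_le_of_degree_le (hdeg _)) hh hleft hright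
      ((intervalIntegrable_iff_integrableOn_Icc_of_le (by norm_num)).2 hψint) hmom,
    ← mul_assoc, rpow_half_pred_mul_zpow_one_sub two_pos]
  refine congrArg _ (Finset.sum_congr rfl fun m _ => ?_)
  rw [← zpow_natCast h, ← zpow_mul]
end

section
/- (γ-mode, two dimensions) Let k ∈ ℕ and let ψ_1, ψ_2 : ℝ → ℝ each be integrable on [−1,1], vanish outside [−1,1], and have vanishing moments up to order k. Let u : [−1,1]² → ℝ be given on each of the four quadrants by a bivariate polynomial of degree at most k in each variable: u(x,y) = Σ_{p,q=0}^{k} c^{σ τ}_{p,q} x^p y^q for x in the half-interval of sign σ (σ = − for x ∈ [−1,0), σ = + for x ∈ [0,1]) and y in the half-interval of sign τ (defined analogously). Then ∫_{−1}^{1} ∫_{−1}^{1} u(x,y) ψ_1(x) ψ_2(y) dx dy = Σ_{p,q=0}^{k} ( ∫_{0}^{1} x^p ψ_1(x) dx )( ∫_{0}^{1} y^q ψ_2(y) dy ) · ( c^{++}_{p,q} − c^{+−}_{p,q} − c^{−+}_{p,q} + c^{−−}_{p,q} ); the coefficient combination equals 1/(p! q!) times the mixed jump of ∂_x^p ∂_y^q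 u at the origin, i.e. the alternating sum of its four one-sided limits. -/
/-!
A polynomial of degree at most `k` integrates to zero against a function with vanishing moments
up to order `k`. Hence, in one variable, subtracting the left polynomial piece from a piecewise
polynomial leaves only the jump `P₊ - P₋`, integrated over the right half-interval. Applying this
in `x` for each fixed `y` turns the inner integral into a piecewise polynomial in `y` whose
pieces are the `x`-jumps; applying it once more in `y` produces the mixed jump.
-/

open MeasureTheory Finset

section

variable {ψ : ℝ → ℝ} {a b c : ℝ}

theorem intervalIntegrable_polynomial_mul (hψ : IntervalIntegrable ψ volume a b)
    (s : Finset ℕ) (d : ℕ → ℝ) :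
    IntervalIntegrable (fun x => (∑ p ∈ s, d p * x ^ p) * ψ x) volume a b :=
  hψ.continuousOn_mul (by fun_prop)

theorem integral_polynomial_mul (hψ : IntervalIntegrable ψ volume a b) (s : Finset ℕ)
    (d : ℕ → ℝ) :
    ∫ x in a..b, (∑ p ∈ s, d p * x ^ p) * ψ x = ∑ p ∈ s, d p * ∫ x in a..b, x ^ p * ψ x := by
  simp_rw [sum_mul, mul_assoc]
  rw [intervalIntegral.integral_finsetSum fun p _ =>
    ((hψ.continuousOn_mul (continuous_pow p).continuousOn).const_mul (d p))]
  simp_rw [intervalIntegral.integral_const_mul]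

theorem integral_polynomial_mul_eq_zero_of_moments {k : ℕ}
    (hψ : IntervalIntegrable ψ volume a b)
    (hmom : ∀ m ≤ k, ∫ x in a..b, x ^ m * ψ x = 0) (d : ℕ → ℝ) :
    ∫ x in a..b, (∑ p ∈ range (k + 1), d p * x ^ p) * ψ x = 0 := by
  rw [integral_polynomial_mul hψ]
  exact sum_eq_zero fun p hp => by rw [hmom p (Nat.lt_succ_iff.mp (mem_range.mp hp)), mul_zero]

theorem integral_piecewise_polynomial_mul {k : ℕ} (hψ : IntervalIntegrable ψ volume a b)
    (hac : a ≤ c) (hcb : c ≤ b) (hmom : ∀ m ≤ k, ∫ x in a..b, x ^ m * ψ x = 0)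
    {f : ℝ → ℝ} {dl dr : ℕ → ℝ}
    (hl : ∀ x ∈ Set.Ioo a c, f x = ∑ p ∈ range (k + 1), dl p * x ^ p)
    (hr : ∀ x ∈ Set.Ioo c b, f x = ∑ p ∈ range (k + 1), dr p * x ^ p) :
    ∫ x in a..b, f x * ψ x =
      ∑ p ∈ range (k + 1), (dr p - dl p) * ∫ x in c..b, x ^ p * ψ x := by
  set L := fun x => (∑ p ∈ range (k + 1), dl p * x ^ p) * ψ x
  set R := fun x => (∑ p ∈ range (k + 1), dr p * x ^ p) * ψ x
  have hc : c ∈ Set.uIcc a b := Set.mem_uIcc_of_le hac hcb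
  have hψl : IntervalIntegrable ψ volume a c := hψ.mono_set (Set.uIcc_subset_uIcc_left hc)
  have hψr : IntervalIntegrable ψ volume c b := hψ.mono_set (Set.uIcc_subset_uIcc_right hc)
  have hfl : Set.EqOn (fun x => f x * ψ x) L (Set.Ioo a c) := fun x hx => by simp [L, hl x hx]
  have hfr : Set.EqOn (fun x => f x * ψ x) R (Set.Ioo c b) := fun x hx => by simp [R, hr x hx]
  -- `L` is annihilated by `ψ` on `[a, b]`, so its integrals over `[a, c]` and `[c, b]` cancel.
  have hL : ∫ x in a..c, L x = -∫ x in c..b, L x := by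
    have hsplit := intervalIntegral.integral_add_adjacent_intervals
      (intervalIntegrable_polynomial_mul hψl (range (k + 1)) dl)
      (intervalIntegrable_polynomial_mul hψr (range (k + 1)) dl)
    rw [integral_polynomial_mul_eq_zero_of_moments hψ hmom] at hsplit
    linarith
  calc ∫ x in a..b, f x * ψ x
      = (∫ x in a..c, f x * ψ x) + ∫ x in c..b, f x * ψ x :=
        (intervalIntegral.integral_add_adjacent_intervals
          ((intervalIntegrable_polynomial_mul hψl (range (k + 1)) dl).congr_uIoo
            ((Set.uIoo_of_le hac).symm ▸ hfl.symm))
          ((intervalIntegrable_polynomial_mul hψr (range (k + 1)) dr).congr_uIoo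
            ((Set.uIoo_of_le hcb).symm ▸ hfr.symm))).symm
    _ = (∫ x in c..b, R x) - ∫ x in c..b, L x := by
        rw [intervalIntegral.integral_congr_Ioo_of_le hac hfl,
          intervalIntegral.integral_congr_Ioo_of_le hcb hfr, hL]
        ring
    _ = ∑ p ∈ range (k + 1), (dr p - dl p) * ∫ x in c..b, x ^ p * ψ x := by
        rw [integral_polynomial_mul hψr, integral_polynomial_mul hψr, ← sum_sub_distrib]
        simp_rw [sub_mul]

theorem sum_sum_mul_pow_mul_pow {R : Type*} [CommSemiring R] (s t : Finset ℕ) (e : ℕ → ℕ → R)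
    (x y : R) :
    ∑ p ∈ s, ∑ q ∈ t, e p q * x ^ p * y ^ q = ∑ p ∈ s, (∑ q ∈ t, e p q * y ^ q) * x ^ p := by
  simp_rw [sum_mul]
  exact sum_congr rfl fun _ _ => sum_congr rfl fun _ _ => by ring

theorem integral_piecewise_tensor_polynomial_mul {k : ℕ} (hψ : IntervalIntegrable ψ volume a b)
    (hac : a ≤ c) (hcb : c ≤ b) (hmom : ∀ m ≤ k, ∫ x in a..b, x ^ m * ψ x = 0)
    {u : ℝ → ℝ → ℝ} {y : ℝ} {el er : ℕ → ℕ → ℝ}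
    (hl : ∀ x ∈ Set.Ioo a c,
      u x y = ∑ p ∈ range (k + 1), ∑ q ∈ range (k + 1), el p q * x ^ p * y ^ q)
    (hr : ∀ x ∈ Set.Ioo c b,
      u x y = ∑ p ∈ range (k + 1), ∑ q ∈ range (k + 1), er p q * x ^ p * y ^ q) :
    ∫ x in a..b, u x y * ψ x = ∑ q ∈ range (k + 1),
      (∑ p ∈ range (k + 1), (er p q - el p q) * ∫ x in c..b, x ^ p * ψ x) * y ^ q := by
  rw [integral_piecewise_polynomial_mul hψ hac hcb hmom
    (fun x hx => (hl x hx).trans (sum_sum_mul_pow_mul_pow _ _ el x y))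
    (fun x hx => (hr x hx).trans (sum_sum_mul_pow_mul_pow _ _ er x y))]
  simp only [← sum_sub_distrib, sum_mul]
  rw [sum_comm]
  exact sum_congr rfl fun _ _ => sum_congr rfl fun _ _ => by ring

end

theorem gamma_mode_multiwavelet_coefficient_jump_general (k : ℕ) (ψ₁ ψ₂ : ℝ → ℝ)
    (u : ℝ → ℝ → ℝ) (cpp cpm cmp cmm : ℕ → ℕ → ℝ)
    (hψ₁int : IntegrableOn ψ₁ (Set.Icc (-1) 1))
    (hmom₁ : ∀ m ≤ k, ∫ t in (-1 : ℝ)..1, t ^ m * ψ₁ t = 0)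
    (hψ₂int : IntegrableOn ψ₂ (Set.Icc (-1) 1))
    (hmom₂ : ∀ m ≤ k, ∫ t in (-1 : ℝ)..1, t ^ m * ψ₂ t = 0)
    (hmm : ∀ x ∈ Set.Ico (-1 : ℝ) 0, ∀ y ∈ Set.Ico (-1 : ℝ) 0,
        u x y = ∑ p ∈ Finset.range (k + 1), ∑ q ∈ Finset.range (k + 1),
          cmm p q * x ^ p * y ^ q)
    (hmp : ∀ x ∈ Set.Ico (-1 : ℝ) 0, ∀ y ∈ Set.Icc (0 : ℝ) 1,
        u x y = ∑ p ∈ Finset.range (k + 1), ∑ q ∈ Finset.range (k + 1),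
          cmp p q * x ^ p * y ^ q)
    (hpm : ∀ x ∈ Set.Icc (0 : ℝ) 1, ∀ y ∈ Set.Ico (-1 : ℝ) 0,
        u x y = ∑ p ∈ Finset.range (k + 1), ∑ q ∈ Finset.range (k + 1),
          cpm p q * x ^ p * y ^ q)
    (hpp : ∀ x ∈ Set.Icc (0 : ℝ) 1, ∀ y ∈ Set.Icc (0 : ℝ) 1,
        u x y = ∑ p ∈ Finset.range (k + 1), ∑ q ∈ Finset.range (k + 1),
          cpp p q * x ^ p * y ^ q) :
    ∫ y in (-1 : ℝ)..1, ∫ x in (-1 : ℝ)..1, u x y * (ψ₁ x * ψ₂ y) =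
      ∑ p ∈ Finset.range (k + 1), ∑ q ∈ Finset.range (k + 1),
        (∫ x in (0 : ℝ)..1, x ^ p * ψ₁ x) * (∫ y in (0 : ℝ)..1, y ^ q * ψ₂ y) *
          (cpp p q - cpm p q - cmp p q + cmm p q) := by
  have hψ₁ : IntervalIntegrable ψ₁ volume (-1) 1 :=
    (intervalIntegrable_iff_integrableOn_Icc_of_le (by norm_num)).2 hψ₁int
  have hψ₂ : IntervalIntegrable ψ₂ volume (-1) 1 :=
    (intervalIntegrable_iff_integrableOn_Icc_of_le (by norm_num)).2 hψ₂int
  have hfactor (y : ℝ) : ∫ x in (-1 : ℝ)..1, u x y * (ψ₁ x * ψ₂ y) =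
      (∫ x in (-1 : ℝ)..1, u x y * ψ₁ x) * ψ₂ y := by
    simp_rw [← intervalIntegral.integral_mul_const, mul_assoc]
  simp_rw [hfactor]
  rw [integral_piecewise_polynomial_mul hψ₂ (by norm_num) (by norm_num) hmom₂
    (fun y hy => integral_piecewise_tensor_polynomial_mul hψ₁ (by norm_num) (by norm_num) hmom₁
      (fun x hx => hmm x (Set.Ioo_subset_Ico_self hx) y (Set.Ioo_subset_Ico_self hy))
      (fun x hx => hpm x (Set.Ioo_subset_Icc_self hx) y (Set.Ioo_subset_Ico_self hy)))
    (fun y hy => integral_piecewise_tensor_polynomial_mul hψ₁ (by norm_num) (by norm_num) hmom₁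
      (fun x hx => hmp x (Set.Ioo_subset_Ico_self hx) y (Set.Ioo_subset_Icc_self hy))
      (fun x hx => hpp x (Set.Ioo_subset_Icc_self hx) y (Set.Ioo_subset_Icc_self hy)))]
  simp only [← sum_sub_distrib, sum_mul]
  rw [sum_comm]
  exact sum_congr rfl fun _ _ => sum_congr rfl fun _ _ => by ring

/-- γ-mode, two dimensions: the γ-mode multiwavelet coefficient of a piecewise bivariate
polynomial equals a weighted sum of the mixed jumps of its coefficients at the origin.
Here `cpp`, `cpm`, `cmp`, `cmm` are the coefficient arrays of the polynomial pieces on the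
quadrants `(+,+)`, `(+,−)`, `(−,+)` and `(−,−)` respectively; the coefficient combination
`cpp p q − cpm p q − cmp p q + cmm p q` equals `1/(p! q!)` times the alternating sum of the
four one-sided limits of `∂ₓᵖ ∂_yᵠ u` at the origin. -/
theorem gamma_mode_multiwavelet_coefficient_jump (k : ℕ) (ψ₁ ψ₂ : ℝ → ℝ)
    (u : ℝ → ℝ → ℝ) (cpp cpm cmp cmm : ℕ → ℕ → ℝ)
    (hψ₁int : IntegrableOn ψ₁ (Set.Icc (-1) 1))
    (hψ₁supp : ∀ x : ℝ, x ∉ Set.Icc (-1 : ℝ) 1 → ψ₁ x = 0)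
    (hmom₁ : ∀ m ≤ k, ∫ t in (-1 : ℝ)..1, t ^ m * ψ₁ t = 0)
    (hψ₂int : IntegrableOn ψ₂ (Set.Icc (-1) 1))
    (hψ₂supp : ∀ y : ℝ, y ∉ Set.Icc (-1 : ℝ) 1 → ψ₂ y = 0)
    (hmom₂ : ∀ m ≤ k, ∫ t in (-1 : ℝ)..1, t ^ m * ψ₂ t = 0)
    (hmm : ∀ x ∈ Set.Ico (-1 : ℝ) 0, ∀ y ∈ Set.Ico (-1 : ℝ) 0,
        u x y = ∑ p ∈ Finset.range (k + 1), ∑ q ∈ Finset.range (k + 1),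
          cmm p q * x ^ p * y ^ q)
    (hmp : ∀ x ∈ Set.Ico (-1 : ℝ) 0, ∀ y ∈ Set.Icc (0 : ℝ) 1,
        u x y = ∑ p ∈ Finset.range (k + 1), ∑ q ∈ Finset.range (k + 1),
          cmp p q * x ^ p * y ^ q)
    (hpm : ∀ x ∈ Set.Icc (0 : ℝ) 1, ∀ y ∈ Set.Ico (-1 : ℝ) 0,
        u x y = ∑ p ∈ Finset.range (k + 1), ∑ q ∈ Finset.range (k + 1),
          cpm p q * x ^ p * y ^ q)
    (hpp : ∀ x ∈ Set.Icc (0 : ℝ) 1, ∀ y ∈ Set.Icc (0 : ℝ) 1,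
        u x y = ∑ p ∈ Finset.range (k + 1), ∑ q ∈ Finset.range (k + 1),
          cpp p q * x ^ p * y ^ q) :
    ∫ y in (-1 : ℝ)..1, ∫ x in (-1 : ℝ)..1, u x y * (ψ₁ x * ψ₂ y) =
      ∑ p ∈ Finset.range (k + 1), ∑ q ∈ Finset.range (k + 1),
        (∫ x in (0 : ℝ)..1, x ^ p * ψ₁ x) * (∫ y in (0 : ℝ)..1, y ^ q * ψ₂ y) *
          (cpp p q - cpm p q - cmp p q + cmm p q) :=
  gamma_mode_multiwavelet_coefficient_jump_general k ψ₁ ψ₂ u cpp cpm cmp cmm hψ₁int hmom₁ hψ₂int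
    hmom₂ hmm hmp hpm hpp
end

section
/- Let r ≥ 1 be a natural number, let d_0^s ≤ d_1^s ≤ … ≤ d_{4r−1}^s be a nondecreasing vector of 4r real numbers, set Q1 = (d_{r−1}^s + d_r^s)/2 and Q3 = (d_{3r−1}^s + d_{3r}^s)/2, and fix a whisker length λ ≥ 1. Then the number of indices j ∈ {0,…,4r−1} for which d_j^s < Q1 − λ(Q3 − Q1) or d_j^s > Q3 + λ(Q3 − Q1) is at most 2(r−1). In particular, for a sorted vector of 16 numbers (r = 4) at most 6 entries can be detected as extreme outliers (λ = 3). -/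
/-- For a nondecreasing vector of `4r` real numbers with Tukey quartiles
`Q1 = (d_{r−1} + d_r)/2` and `Q3 = (d_{3r−1} + d_{3r})/2` and whisker length `λ ≥ 1`,
at most `2(r − 1)` entries lie outside the fences `[Q1 − λ(Q3 − Q1), Q3 + λ(Q3 − Q1)]`.
In particular, for a sorted vector of 16 numbers (`r = 4`) at most 6 entries can be
detected as extreme outliers (`λ = 3`). -/
theorem tukey_outliers_card_bound (r : ℕ) (hr : 1 ≤ r) (d : ℕ → ℝ)
    (hmono : ∀ i j : ℕ, i ≤ j → j < 4 * r → d i ≤ d j)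
    (Q1 Q3 : ℝ) (hQ1 : Q1 = (d (r - 1) + d r) / 2)
    (hQ3 : Q3 = (d (3 * r - 1) + d (3 * r)) / 2)
    (lam : ℝ) (hlam : 1 ≤ lam) :
    ((Finset.range (4 * r)).filter
        (fun j => d j < Q1 - lam * (Q3 - Q1) ∨ Q3 + lam * (Q3 - Q1) < d j)).card ≤
      2 * (r - 1) := by
  have hd1 : d (r - 1) ≤ d r := hmono _ _ (by omega) (by omega)
  have hd2 : d r ≤ d (3 * r - 1) := hmono _ _ (by omega) (by omega)
  have hd3 : d (3 * r - 1) ≤ d (3 * r) := hmono _ _ (by omega) (by omega)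
  have hd4 : d (r - 1) ≤ d (3 * r - 1) := hd1.trans hd2
  have hQ : Q1 ≤ Q3 := by rw [hQ1, hQ3]; linarith
  have hfac : Q3 - Q1 ≤ lam * (Q3 - Q1) := by nlinarith
  set O := (Finset.range (4 * r)).filter
      (fun j => d j < Q1 - lam * (Q3 - Q1) ∨ Q3 + lam * (Q3 - Q1) < d j) with hO
  have hsub : Finset.Icc (r - 1) (3 * r) ⊆ Finset.range (4 * r) := by
    intro j hj
    simp only [Finset.mem_Icc] at hj
    simp only [Finset.mem_range]
    omega
  have hdisj : Disjoint O (Finset.Icc (r - 1) (3 * r)) := by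
    rw [Finset.disjoint_right]
    intro j hj hjO
    simp only [Finset.mem_Icc] at hj
    simp only [hO, Finset.mem_filter, Finset.mem_range] at hjO
    have h1 : d (r - 1) ≤ d j := hmono _ _ hj.1 hjO.1
    have h2 : d j ≤ d (3 * r) := hmono _ _ hj.2 (by omega)
    have hlow : Q1 - lam * (Q3 - Q1) ≤ d (r - 1) := by
      rw [hQ1, hQ3] at *; linarith
    have hup : d (3 * r) ≤ Q3 + lam * (Q3 - Q1) := by
      rw [hQ1, hQ3] at *; linarith
    rcases hjO.2 with h | h <;> linarith
  have hcard : O.card + (Finset.Icc (r - 1) (3 * r)).card ≤ 4 * r := by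
    rw [← Finset.card_union_of_disjoint hdisj]
    calc (O ∪ Finset.Icc (r - 1) (3 * r)).card
        ≤ (Finset.range (4 * r)).card :=
          Finset.card_le_card (Finset.union_subset (Finset.filter_subset _ _) hsub)
      _ = 4 * r := Finset.card_range _
  rw [Nat.card_Icc] at hcard
  omega
end
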